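/- Let Ĥ₁ be the multigraph with vertices a₁,b₁,v₁,v₂,a₂,b₂, a double edge between a₁ and b₁, a double edge between a₂ and b₂, and single edges a₁v₁, b₁v₁, v₁v₂, a₂v₂, b₂v₂; and let Ĥ₂ be the multigraph obtained from Ĥ₁ by identifying v₁ and v₂ into a single vertex v (so Ĥ₂ has vertices a₁,b₁,v,a₂,b₂, double edges a₁b₁ and a₂b₂, and single edges a₁v, b₁v, a₂v, b₂v). Then no ≥2-subdivision of Ĥ₁ and no ≥2-subdivision of Ĥ₂ is a restricted frame graph. -/

import Mathlib

/-! ## Frames and restricted frame graphs -/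

/-- An axis-parallel box in `ℝ²`, i.e. a product `[x1,x2] × [y1,y2]` of two closed
nondegenerate intervals. -/
structure Box : Type where
  x1 : ℝ
  x2 : ℝ
  y1 : ℝ
  y2 : ℝ
  hx : x1 < x2
  hy : y1 < y2

namespace Box

/-- The region bounded by the frame of a box: the closed box itself. -/
def region (B : Box) : Set (ℝ × ℝ) :=
  {p : ℝ × ℝ | B.x1 ≤ p.1 ∧ p.1 ≤ B.x2 ∧ B.y1 ≤ p.2 ∧ p.2 ≤ B.y2}

/-- The frame of a box: the topological boundary of the closed box. -/
def frame (B : Box) : Set (ℝ × ℝ) :=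
  {p : ℝ × ℝ | p ∈ B.region ∧ (p.1 = B.x1 ∨ p.1 = B.x2 ∨ p.2 = B.y1 ∨ p.2 = B.y2)}

/-- The left side `{x1} × [y1,y2]` of a frame. -/
def leftSide (B : Box) : Set (ℝ × ℝ) :=
  {p : ℝ × ℝ | p.1 = B.x1 ∧ B.y1 ≤ p.2 ∧ p.2 ≤ B.y2}

/-- The right side `{x2} × [y1,y2]` of a frame. -/
def rightSide (B : Box) : Set (ℝ × ℝ) :=
  {p : ℝ × ℝ | p.1 = B.x2 ∧ B.y1 ≤ p.2 ∧ p.2 ≤ B.y2}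

/-- The top side `[x1,x2] × {y2}` of a frame. -/
def topSide (B : Box) : Set (ℝ × ℝ) :=
  {p : ℝ × ℝ | p.2 = B.y2 ∧ B.x1 ≤ p.1 ∧ p.1 ≤ B.x2}

/-- The bottom side `[x1,x2] × {y1}` of a frame. -/
def bottomSide (B : Box) : Set (ℝ × ℝ) :=
  {p : ℝ × ℝ | p.2 = B.y1 ∧ B.x1 ≤ p.1 ∧ p.1 ≤ B.x2}

/-- The four corners of a frame. -/
def corners (B : Box) : Set (ℝ × ℝ) :=
  {(B.x1, B.y1), (B.x1, B.y2), (B.x2, B.y1), (B.x2, B.y2)}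

/-- `Box.Inside inner outer` : the frame of `outer` contains the frame of `inner`,
i.e. the two frames are disjoint and the frame of `inner` is contained in the region
bounded by the frame of `outer`. -/
def Inside (inner outer : Box) : Prop :=
  inner.frame ∩ outer.frame = ∅ ∧ inner.frame ⊆ outer.region

/-- `Box.Outside B outer` : the frames are disjoint and `B` is not inside `outer`. -/
def Outside (B outer : Box) : Prop :=
  B.frame ∩ outer.frame = ∅ ∧ ¬ Inside B outer

end Box

/-- A family of frames `(F v)` is a representation of the graph `G` as a restricted
frame graph: distinct vertices are adjacent iff their frames intersect, and the four
restrictions on the representation hold. -/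
structure IsFrameRepresentation {V : Type} (G : SimpleGraph V) (F : V → Box) : Prop where
  /-- Distinct vertices are adjacent iff their frames intersect. -/
  adj_iff : ∀ u v : V, u ≠ v → (G.Adj u v ↔ ((F u).frame ∩ (F v).frame).Nonempty)
  /-- (1) Corners of a frame do not coincide with any point of another frame. -/
  corner_free : ∀ u v : V, u ≠ v → (F u).corners ∩ (F v).frame = ∅
  /-- (2) The left side of a frame does not intersect any other frame. -/
  left_free : ∀ u v : V, u ≠ v → (F u).leftSide ∩ (F v).frame = ∅
  /-- (3) If the right side of a frame intersects a second frame, this right side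
  intersects both the top and the bottom side of that second frame. -/
  right_cross : ∀ u v : V, u ≠ v →
    ((F u).rightSide ∩ (F v).frame).Nonempty →
    ((F u).rightSide ∩ (F v).topSide).Nonempty ∧
      ((F u).rightSide ∩ (F v).bottomSide).Nonempty
  /-- (4) If two frames intersect, no third frame is entirely contained in the
  intersection of the regions bounded by the two frames. -/
  not_nested : ∀ u v w : V, u ≠ v → w ≠ u → w ≠ v →
    ((F u).frame ∩ (F v).frame).Nonempty →
    ¬ ((F w).frame ⊆ (F u).region ∩ (F v).region)

/-- A graph is a restricted frame graph if it admits a frame representation. -/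
def IsRestrictedFrameGraph {V : Type} (G : SimpleGraph V) : Prop :=
  ∃ F : V → Box, IsFrameRepresentation G F

/-! ## Basic graph notions -/

/-- The closed neighborhood `N[u] = {u} ∪ N(u)`. -/
def closedNbhd {V : Type} (G : SimpleGraph V) (u : V) : Set V :=
  insert u (G.neighborSet u)

/-- `G` has a full star-cutset: for some vertex `u` the removal of `N[u]`
disconnects `G`. -/
def HasFullStarCutset {V : Type} (G : SimpleGraph V) : Prop :=
  ∃ u : V, ¬ (G.induce ((closedNbhd G u)ᶜ)).Preconnected

/-- `v` is a cut-vertex of `G`: its removal disconnects `G`. -/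
def IsCutVertex {V : Type} (G : SimpleGraph V) (v : V) : Prop :=
  ¬ (G.induce {u : V | u ≠ v}).Preconnected

/-- `G` is a path graph: its vertices can be enumerated `0, …, n-1` so that two
vertices are adjacent iff they are consecutive. -/
def IsPathGraph {V : Type} (G : SimpleGraph V) : Prop :=
  ∃ (n : ℕ) (e : V ≃ Fin n), ∀ u v : V,
    G.Adj u v ↔ ((e u : ℕ) + 1 = (e v : ℕ) ∨ (e v : ℕ) + 1 = (e u : ℕ))

/-- `G` is a cycle graph (on at least 3 vertices). -/
def IsCycleGraphOn {V : Type} (G : SimpleGraph V) : Prop :=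
  ∃ n : ℕ, 3 ≤ n ∧ ∃ e : V ≃ Fin n, ∀ u v : V,
    G.Adj u v ↔ (((e u : ℕ) + 1) % n = (e v : ℕ) ∨ ((e v : ℕ) + 1) % n = (e u : ℕ))

/-- `x` is a leaf of `T`: it has exactly one neighbor. -/
def IsLeaf {V : Type} (T : SimpleGraph V) (x : V) : Prop :=
  (T.neighborSet x).ncard = 1

/-- `G` is a chandelier with pivot `v`: `G - v` is a tree `T` and `v` is adjacent to
exactly the leaves of `T`. -/
def IsChandelierWithPivot {V : Type} (G : SimpleGraph V) (v : V) : Prop :=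
  (G.induce {u : V | u ≠ v}).IsTree ∧
    ∀ u : ↥{u : V | u ≠ v}, (G.Adj v u.val ↔ IsLeaf (G.induce {u : V | u ≠ v}) u)

/-- `G` is a chandelier. -/
def IsChandelier {V : Type} (G : SimpleGraph V) : Prop :=
  ∃ v : V, IsChandelierWithPivot G v

/-- `G` is a luxury chandelier: a chandelier (with pivot `v` and tree `T = G - v`)
such that the neighbor in `T` of each leaf of `T` has degree 2 in `T`. -/
def IsLuxuryChandelier {V : Type} (G : SimpleGraph V) : Prop :=
  ∃ v : V, IsChandelierWithPivot G v ∧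
    ∀ x y : ↥{u : V | u ≠ v}, (G.induce {u : V | u ≠ v}).Adj x y →
      IsLeaf (G.induce {u : V | u ≠ v}) x →
      ((G.induce {u : V | u ≠ v}).neighborSet y).ncard = 2

/-! ## Multigraphs and subdivisions -/

/-- A loopless multigraph on vertex set `V`: a symmetric multiplicity function. -/
structure Multigraph (V : Type) where
  m : V → V → ℕ
  symm : ∀ u v : V, m u v = m v u
  loopless : ∀ v : V, m v v = 0

/-- The multigraph associated with a simple graph (each edge has multiplicity 1). -/
noncomputable def SimpleGraph.toMultigraph {V : Type} (G : SimpleGraph V) : Multigraph V where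
  m u v := @ite ℕ (G.Adj u v) (Classical.dec _) 1 0
  symm u v := by
    beta_reduce
    by_cases h : G.Adj u v
    · rw [if_pos h, if_pos (G.adj_symm h)]
    · rw [if_neg h, if_neg (fun h' => h (G.adj_symm h'))]
  loopless v := by
    beta_reduce
    rw [if_neg G.irrefl]

/-- The interior (set of internal vertices) of a walk. -/
def walkInterior {V : Type} {G : SimpleGraph V} {a b : V} (p : G.Walk a b) : Set V :=
  {w : V | w ∈ p.support ∧ w ≠ a ∧ w ≠ b}

/-- A witness that the simple graph `H` is a `≥k`-subdivision of the multigraph `G`: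
each edge of `G` (counted with multiplicity) is replaced by a path with at least
`k+1` edges between (the images of) its endpoints, these paths being internally
disjoint from each other and from the branch vertices, and covering all of `H`. -/
structure MultiSubdivision {V W : Type} (G : Multigraph V) (H : SimpleGraph W) (k : ℕ) where
  /-- the embedding of branch vertices -/
  f : V ↪ W
  /-- the path replacing the `i`-th parallel edge between `u` and `v` -/
  path : ∀ u v : V, Fin (G.m u v) → H.Walk (f u) (f v)
  path_symm : ∀ (u v : V) (i : Fin (G.m u v)),
    path v u (Fin.cast (G.symm u v) i) = (path u v i).reverse
  path_ne : ∀ (u v : V) (i i' : Fin (G.m u v)), (i : ℕ) ≠ (i' : ℕ) →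
    path u v i ≠ path u v i'
  isPath : ∀ (u v : V) (i : Fin (G.m u v)), (path u v i).IsPath
  length_le : ∀ (u v : V) (i : Fin (G.m u v)), k + 1 ≤ (path u v i).length
  /-- the paths are internally disjoint from the branch vertices -/
  interior_avoid : ∀ (u v : V) (i : Fin (G.m u v)) (x : V),
    f x ∉ walkInterior (path u v i)
  /-- distinct paths are pairwise internally disjoint -/
  interior_disjoint : ∀ (u v : V) (i : Fin (G.m u v)) (u' v' : V) (i' : Fin (G.m u' v')),
    (walkInterior (path u v i) ∩ walkInterior (path u' v' i')).Nonempty →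
    (u = u' ∧ v = v' ∧ (i : ℕ) = (i' : ℕ)) ∨ (u = v' ∧ v = u' ∧ (i : ℕ) = (i' : ℕ))
  /-- every vertex of `H` is a branch vertex or an internal vertex of a path -/
  vertex_cover : ∀ w : W, (∃ x : V, f x = w) ∨
    ∃ (u v : V) (i : Fin (G.m u v)), w ∈ walkInterior (path u v i)
  /-- every edge of `H` lies on one of the paths -/
  edge_cover : ∀ e ∈ H.edgeSet, ∃ (u v : V) (i : Fin (G.m u v)), e ∈ (path u v i).edges

/-- `H` is a `≥k`-subdivision of the multigraph `G`. -/
def IsSubdivisionGE {V W : Type} (G : Multigraph V) (k : ℕ) (H : SimpleGraph W) : Prop :=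
  Nonempty (MultiSubdivision G H k)

/-- `H` is a subdivision of the simple graph `G` (every edge is replaced by a path
with at least one edge). -/
def IsSubdivision {V W : Type} (G : SimpleGraph V) (H : SimpleGraph W) : Prop :=
  IsSubdivisionGE G.toMultigraph 0 H

namespace Multigraph

/-- The underlying simple graph of a multigraph. -/
def support {V : Type} (G : Multigraph V) : SimpleGraph V where
  Adj u v := 0 < G.m u v
  symm := by
    constructor
    intro u v h
    beta_reduce at h ⊢
    rw [G.symm v u]
    exact h
  loopless := by
    constructor
    intro v h
    beta_reduce at h
    rw [G.loopless v] at h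
    exact Nat.lt_irrefl 0 h

/-- A multigraph is connected if its underlying simple graph is. -/
def Connected {V : Type} (G : Multigraph V) : Prop :=
  G.support.Connected

/-- A multigraph is 2-connected if it is connected, has at least two vertices, and
deleting any single vertex leaves it connected. -/
def TwoConnected {V : Type} (G : Multigraph V) : Prop :=
  G.support.Connected ∧ (∃ u v : V, u ≠ v) ∧
    ∀ v : V, (G.support.induce {u : V | u ≠ v}).Connected

/-- `v` is a feedback vertex of the multigraph `G`: `G - v` contains no cycle
(where a pair of parallel edges forms a cycle of length 2). -/
def IsFeedbackVertex {V : Type} (G : Multigraph V) (v : V) : Prop :=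
  (G.support.induce {u : V | u ≠ v}).IsAcyclic ∧
    ∀ u w : V, u ≠ v → w ≠ v → G.m u w ≤ 1

end Multigraph

/-! ## Induced cycles and big vertices -/

/-- `C` induces a cycle in `G`. -/
def IsInducedCycle {V : Type} (G : SimpleGraph V) (C : Set V) : Prop :=
  IsCycleGraphOn (G.induce C)

/-- `v` is a big vertex of the (induced cycle on) `C` with respect to the frame
representation `F`: `v ∈ C` and `F v` contains the frame of every vertex of `C`
outside `N[v]`. -/
def IsBigVertexOf {V : Type} (G : SimpleGraph V) (F : V → Box) (C : Set V) (v : V) : Prop :=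
  v ∈ C ∧ ∀ u ∈ C, u ≠ v → ¬ G.Adj v u → Box.Inside (F u) (F v)

/-- `v` is a big vertex of the representation `F`: it is a big vertex of some
induced cycle of `G`. -/
def IsBigVertex {V : Type} (G : SimpleGraph V) (F : V → Box) (v : V) : Prop :=
  ∃ C : Set V, IsInducedCycle G C ∧ IsBigVertexOf G F C v

/-! ## Gluing a chandelier onto a vertex -/

/-- The graph obtained from the disjoint union of `G₁` and `G₂` by identifying the
vertex `v` of `G₁` with the vertex `p` of `G₂`. -/
def glueAt {V₁ V₂ : Type} (G₁ : SimpleGraph V₁) (G₂ : SimpleGraph V₂) (v : V₁) (p : V₂) :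
    SimpleGraph (V₁ ⊕ {x : V₂ // x ≠ p}) :=
  SimpleGraph.fromRel (fun a b =>
    match a, b with
    | Sum.inl u, Sum.inl w => G₁.Adj u w
    | Sum.inr u, Sum.inr w => G₂.Adj u.val w.val
    | Sum.inl u, Sum.inr w => u = v ∧ G₂.Adj p w.val
    | Sum.inr _, Sum.inl _ => False)

/-! ## The multigraphs `Ĥ₁` and `Ĥ₂` -/

/-- The multiplicity matrix of `Ĥ₁` (vertices `a₁ = 0`, `b₁ = 1`, `v₁ = 2`, `v₂ = 3`,
`a₂ = 4`, `b₂ = 5`). -/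
def H1hatMatrix : Matrix (Fin 6) (Fin 6) ℕ :=
  !![0, 2, 1, 0, 0, 0;
     2, 0, 1, 0, 0, 0;
     1, 1, 0, 1, 0, 0;
     0, 0, 1, 0, 1, 1;
     0, 0, 0, 1, 0, 2;
     0, 0, 0, 1, 2, 0]

/-- The multigraph `Ĥ₁`: two disjoint digons `a₁b₁`, `a₂b₂`, and single edges
`a₁v₁`, `b₁v₁`, `v₁v₂`, `a₂v₂`, `b₂v₂`. -/
def H1hat : Multigraph (Fin 6) where
  m u v := H1hatMatrix u v
  symm := by intro u v; fin_cases u <;> fin_cases v <;> rfl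
  loopless := by decide

/-- The multiplicity matrix of `Ĥ₂` (vertices `a₁ = 0`, `b₁ = 1`, `v = 2`,
`a₂ = 3`, `b₂ = 4`). -/
def H2hatMatrix : Matrix (Fin 5) (Fin 5) ℕ :=
  !![0, 2, 1, 0, 0;
     2, 0, 1, 0, 0;
     1, 1, 0, 1, 1;
     0, 0, 1, 0, 2;
     0, 0, 1, 2, 0]

/-- The multigraph `Ĥ₂`: two digons `a₁b₁`, `a₂b₂`, and single edges
`a₁v`, `b₁v`, `a₂v`, `b₂v`. -/
def H2hat : Multigraph (Fin 5) where
  m u v := H2hatMatrix u v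
  symm := by intro u v; fin_cases u <;> fin_cases v <;> rfl
  loopless := by decide

/-! ## Subdivisions of `K₄` and their type -/

/-- The complete graph on four vertices. -/
def K4 : SimpleGraph (Fin 4) := ⊤

/-- The set of edges of `K₄` that are subdivided at least once in the subdivision
witnessed by `S` (i.e. replaced by a path with at least two edges). -/
def subdividedEdges {W : Type} {H : SimpleGraph W}
    (S : MultiSubdivision K4.toMultigraph H 0) : Set (Sym2 (Fin 4)) :=
  {e : Sym2 (Fin 4) | ∃ (u v : Fin 4) (i : Fin (K4.toMultigraph.m u v)),
    e = s(u, v) ∧ 2 ≤ (S.path u v i).length}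

/-! ## Adding a twin -/

/-- The graph obtained from `G` by adding a twin of `v`: a new vertex, non-adjacent
to `v`, whose neighborhood is exactly `N(v)`. -/
def addTwin {V : Type} (G : SimpleGraph V) (v : V) : SimpleGraph (V ⊕ Unit) :=
  SimpleGraph.fromRel (fun a b =>
    match a, b with
    | Sum.inl u, Sum.inl w => G.Adj u w
    | Sum.inr _, Sum.inl u => G.Adj v u
    | _, _ => False)

/-! ## The construction of Burling and Pawlik et al. -/

/-- A graph-stable set pair: a graph together with a collection of sets of vertices
(intended: stable sets). -/
structure GSPair : Type 1 where
  V : Type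
  G : SimpleGraph V
  S : Set (Set V)

namespace GSPair

/-- The vertex type of `next P`: the original vertices, the vertices `(s, u)` of the
copy `H_s` of the graph for each `s ∈ 𝒮`, and the new vertices `v_{s,t}`. -/
abbrev nextVertex (P : GSPair) : Type :=
  P.V ⊕ ((↥P.S × P.V) ⊕ (↥P.S × ↥P.S))

/-- The adjacency generator for the graph of `next P`. -/
def nextRel (P : GSPair) : P.nextVertex → P.nextVertex → Prop
  | Sum.inl u, Sum.inl v => P.G.Adj u v
  | Sum.inr (Sum.inl (s, u)), Sum.inr (Sum.inl (t, v)) => s = t ∧ P.G.Adj u v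
  | Sum.inr (Sum.inr (s, t)), Sum.inr (Sum.inl (s', v)) => s = s' ∧ v ∈ (t : Set P.V)
  | _, _ => False

/-- The procedure `next`: add a disjoint copy `H_s` of the graph for each `s ∈ 𝒮`, a
vertex `v_{s,t}` whose neighborhood is exactly the copy of `t` inside `H_s` for all
`s, t ∈ 𝒮`, and take as new collection of stable sets all `s ∪ t_s` and
`s ∪ {v_{s,t}}`. -/
def next (P : GSPair) : GSPair where
  V := P.nextVertex
  G := SimpleGraph.fromRel P.nextRel
  S := {A : Set P.nextVertex | ∃ s t : ↥P.S,
    A = (Sum.inl '' (s : Set P.V) : Set P.nextVertex) ∪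
        ((fun u : P.V => (Sum.inr (Sum.inl (s, u)) : P.nextVertex)) '' (t : Set P.V)) ∨
    A = (Sum.inl '' (s : Set P.V) : Set P.nextVertex) ∪ {Sum.inr (Sum.inr (s, t))}}

/-- The starting pair: a single vertex, with the single stable set consisting of
that vertex. -/
def base : GSPair := ⟨PUnit, ⊥, {Set.univ}⟩

/-- `P` is an induced subgraph-stable set pair of `Q`. -/
def IsInducedSubpair (P Q : GSPair) : Prop :=
  ∃ f : P.V ↪ Q.V, (∀ u v : P.V, P.G.Adj u v ↔ Q.G.Adj (f u) (f v)) ∧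
    ∀ A ∈ P.S, ∃ B ∈ Q.S, A = f ⁻¹' B

/-- A graph-stable set pair is constructible if it is an induced subgraph-stable set
pair of some iterate of `next` on the starting pair. -/
def Constructible (P : GSPair) : Prop :=
  ∃ i : ℕ, IsInducedSubpair P (next^[i] base)

end GSPair


/-! In a frame representation the frames of adjacent vertices cross (the right side of one runs
through the other), while those of non-adjacent vertices are disjoint, hence separated or strictly
nested. Consequently, once `F z` lies strictly inside `F w`, so does the frame of every vertex
reachable from `z` by a walk avoiding the closed neighbourhood `N[w]`.

In a `≥2`-subdivision the two paths replacing a double edge `ab` form a cycle `C`. Its vertex `t`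
whose frame has the rightmost left side has two cycle neighbours crossing `F t` from the left; they
are non-adjacent (the subdivision is triangle-free), so one of their frames, `F z`, lies strictly
inside the other, `F w`. From `z` a walk avoiding `N[w]` runs along `C` to `a` or `b`, then through
the rest of the multigraph to the second double edge `cd`, and along its cycle `C'`: all frames of
`C'` lie strictly inside `F w`. The same argument with the roles of the double edges exchanged
puts `F w` strictly inside the frame of some vertex of `C'`, which is absurd. -/

namespace Box

/-- The right side of `A` runs through `B` from below its bottom side to above its top side. -/
def Crosses (A B : Box) : Prop :=
  A.x1 < B.x1 ∧ B.x1 < A.x2 ∧ A.x2 < B.x2 ∧ A.y1 < B.y1 ∧ B.y2 < A.y2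

def StrictlyInside (A B : Box) : Prop :=
  B.x1 < A.x1 ∧ A.x2 < B.x2 ∧ B.y1 < A.y1 ∧ A.y2 < B.y2

variable {A B C : Box} {x y : ℝ}

lemma left_mem_frame (B : Box) (h₁ : B.y1 ≤ y) (h₂ : y ≤ B.y2) : (B.x1, y) ∈ B.frame :=
  ⟨⟨le_rfl, B.hx.le, h₁, h₂⟩, Or.inl rfl⟩

lemma right_mem_frame (B : Box) (h₁ : B.y1 ≤ y) (h₂ : y ≤ B.y2) : (B.x2, y) ∈ B.frame :=
  ⟨⟨B.hx.le, le_rfl, h₁, h₂⟩, Or.inr <| Or.inl rfl⟩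

lemma bottom_mem_frame (B : Box) (h₁ : B.x1 ≤ x) (h₂ : x ≤ B.x2) : (x, B.y1) ∈ B.frame :=
  ⟨⟨h₁, h₂, le_rfl, B.hy.le⟩, Or.inr <| Or.inr <| Or.inl rfl⟩

lemma top_mem_frame (B : Box) (h₁ : B.x1 ≤ x) (h₂ : x ≤ B.x2) : (x, B.y2) ∈ B.frame :=
  ⟨⟨h₁, h₂, B.hy.le, le_rfl⟩, Or.inr <| Or.inr <| Or.inr rfl⟩

lemma StrictlyInside.asymm (h : A.StrictlyInside B) : ¬ B.StrictlyInside A := by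
  unfold StrictlyInside at *
  intro h'
  linarith [h.1, h'.1]

lemma StrictlyInside.region_subset (h : A.StrictlyInside B) : A.region ⊆ B.region := by
  rintro p ⟨h₁, h₂, h₃, h₄⟩
  obtain ⟨k₁, k₂, k₃, k₄⟩ := h
  exact ⟨by linarith, by linarith, by linarith, by linarith⟩

lemma Crosses.mem_region (h : A.Crosses B) : (B.x1, B.y1) ∈ A.region := by
  obtain ⟨h₁, h₂, -, h₄, h₅⟩ := h
  exact ⟨h₁.le, h₂.le, h₄.le, by linarith [B.hy]⟩

lemma Crosses.region_inter_nonempty (h : A.Crosses B) : (A.region ∩ B.region).Nonempty :=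
  ⟨(B.x1, B.y1), h.mem_region, le_rfl, B.hx.le, le_rfl, B.hy.le⟩

lemma strictlyInside_or_strictlyInside (hd : A.frame ∩ B.frame = ∅)
    (hAB : (A.region ∩ B.region).Nonempty) : A.StrictlyInside B ∨ B.StrictlyInside A := by
  wlog hx : A.x1 < B.x1 generalizing A B
  · rw [Set.inter_comm] at hd hAB
    refine (this hd hAB (lt_of_le_of_ne (not_lt.mp hx) fun he => ?_)).symm
    obtain ⟨p, ⟨-, -, h₃, h₄⟩, -, -, h₇, h₈⟩ := hAB
    exact Set.disjoint_left.mp (Set.disjoint_iff_inter_eq_empty.mpr hd)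
      (B.left_mem_frame h₃ h₄) (he ▸ A.left_mem_frame h₇ h₈)
  right
  have hd := Set.disjoint_left.mp (Set.disjoint_iff_inter_eq_empty.mpr hd)
  obtain ⟨p, ⟨h₁, h₂, h₃, h₄⟩, h₅, h₆, h₇, h₈⟩ := hAB
  have hBx : B.x1 < A.x2 := lt_of_le_of_ne (by linarith) fun he =>
    hd (A.right_mem_frame h₃ h₄) (he ▸ B.left_mem_frame h₇ h₈)
  have hy₁ : A.y1 < B.y1 := lt_of_not_ge fun h =>
    hd (A.bottom_mem_frame hx.le hBx.le) (B.left_mem_frame h (by linarith))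
  have hy₂ : B.y2 < A.y2 := lt_of_not_ge fun h =>
    hd (A.top_mem_frame hx.le hBx.le) (B.left_mem_frame (by linarith) h)
  refine ⟨hx, lt_of_not_ge fun h => ?_, hy₁, hy₂⟩
  have hAx : A.x2 < B.x2 := lt_of_le_of_ne h fun he =>
    hd (he ▸ A.right_mem_frame hy₁.le (by linarith [B.hy])) (B.right_mem_frame le_rfl B.hy.le)
  exact hd (A.right_mem_frame hy₁.le (by linarith [B.hy])) (B.bottom_mem_frame hBx.le hAx.le)

lemma StrictlyInside.of_crosses (hA : A.StrictlyInside C) (hAB : A.Crosses B ∨ B.Crosses A)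
    (hd : B.frame ∩ C.frame = ∅) : B.StrictlyInside C := by
  have hBC : (B.region ∩ C.region).Nonempty := by
    obtain ⟨p, hpA, hpB⟩ : (A.region ∩ B.region).Nonempty := by
      rcases hAB with h | h
      · exact h.region_inter_nonempty
      · exact Set.inter_comm B.region _ ▸ h.region_inter_nonempty
    exact ⟨p, hpB, hA.region_subset hpA⟩
  refine (strictlyInside_or_strictlyInside hd hBC).resolve_right fun hC => ?_
  unfold StrictlyInside Crosses at *
  rcases hAB with h | h <;> linarith [h.1, h.2.2.1]

end Box

namespace IsFrameRepresentation

variable {V : Type} {G : SimpleGraph V} {F : V → Box} {u v w : V}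

lemma crosses_of_rightSide (hF : IsFrameRepresentation G F) (huv : u ≠ v)
    (h : ((F u).rightSide ∩ (F v).frame).Nonempty) : (F u).Crosses (F v) := by
  obtain ⟨⟨_, _⟩, ⟨rfl, hp₁, hp₂⟩, rfl, hp₃, hp₄⟩ := (hF.right_cross u v huv h).1
  obtain ⟨⟨_, _⟩, ⟨rfl, hq₁, hq₂⟩, rfl, -, -⟩ := (hF.right_cross u v huv h).2
  have huv' := Set.disjoint_left.mp (Set.disjoint_iff_inter_eq_empty.mpr (hF.corner_free u v huv))
  have hvu := Set.disjoint_left.mp (Set.disjoint_iff_inter_eq_empty.mpr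
    (hF.corner_free v u huv.symm))
  have hl := Set.disjoint_left.mp (Set.disjoint_iff_inter_eq_empty.mpr (hF.left_free u v huv))
  have hx₁ : (F v).x1 < (F u).x2 := lt_of_le_of_ne hp₃ fun he =>
    hvu (by simp [Box.corners]) (he ▸ (F u).right_mem_frame hp₁ hp₂)
  have hx₂ : (F u).x2 < (F v).x2 := lt_of_le_of_ne hp₄ fun he =>
    hvu (by simp [Box.corners]) (he ▸ (F u).right_mem_frame hp₁ hp₂)
  have hy₁ : (F u).y1 < (F v).y1 := lt_of_le_of_ne hq₁ fun he =>
    huv' (by simp [Box.corners]) (he ▸ (F v).bottom_mem_frame hp₃ hp₄)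
  have hy₂ : (F v).y2 < (F u).y2 := lt_of_le_of_ne hp₂ fun he =>
    huv' (by simp [Box.corners]) (he ▸ (F v).top_mem_frame hp₃ hp₄)
  refine ⟨lt_of_not_ge fun h => ?_, hx₁, hx₂, hy₁, hy₂⟩
  exact hl (show ((F u).x1, (F v).y1) ∈ (F u).leftSide from ⟨rfl, hq₁, hq₂⟩)
    ((F v).bottom_mem_frame h (by linarith [(F u).hx]))

lemma crosses_or_crosses (hF : IsFrameRepresentation G F) (h : G.Adj u v) :
    (F u).Crosses (F v) ∨ (F v).Crosses (F u) := by
  wlog hx : (F v).x1 ≤ (F u).x1 generalizing u v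
  · exact (this h.symm (le_of_not_ge hx)).symm
  by_cases hru : ((F u).rightSide ∩ (F v).frame).Nonempty
  · exact Or.inl (hF.crosses_of_rightSide h.ne hru)
  by_cases hrv : ((F v).rightSide ∩ (F u).frame).Nonempty
  · exact Or.inr (hF.crosses_of_rightSide h.ne.symm hrv)
  -- then both frames are horizontal at a common point, and the corner of `F u` at that height
  -- lies on `F v`
  exfalso
  obtain ⟨⟨x, y⟩, hu, hv⟩ := (hF.adj_iff u v h.ne).mp h
  have horizontal : ∀ {a b}, a ≠ b → (x, y) ∈ (F a).frame → (x, y) ∈ (F b).frame →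
      ¬ ((F a).rightSide ∩ (F b).frame).Nonempty → y = (F a).y1 ∨ y = (F a).y2 := by
    rintro a b hab ⟨⟨-, -, ha₁, ha₂⟩, (hx | hx | hy)⟩ hb hr
    · exact absurd (hF.left_free a b hab) (Set.nonempty_iff_ne_empty.mp ⟨_, ⟨hx, ha₁, ha₂⟩, hb⟩)
    · exact absurd ⟨_, ⟨hx, ha₁, ha₂⟩, hb⟩ hr
    · exact hy
  have hcorner : ((F u).x1, y) ∈ (F u).corners := by
    rcases horizontal h.ne hu hv hru with rfl | rfl <;> simp [Box.corners]
  exact Set.disjoint_left.mp (Set.disjoint_iff_inter_eq_empty.mpr (hF.corner_free u v h.ne))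
    hcorner ⟨⟨hx, hu.1.1.trans hv.1.2.1, hv.1.2.2⟩,
      Or.inr (Or.inr (horizontal h.ne.symm hv hu hrv))⟩

lemma frame_inter_eq_empty (hF : IsFrameRepresentation G F) (huv : u ≠ v) (h : ¬ G.Adj u v) :
    (F u).frame ∩ (F v).frame = ∅ :=
  Set.not_nonempty_iff_eq_empty.mp fun hne => h ((hF.adj_iff u v huv).mpr hne)

lemma strictlyInside_of_walk (hF : IsFrameRepresentation G F) {x y : V} (q : G.Walk x y)
    (hq : ∀ z ∈ q.support, z ∉ closedNbhd G w) (hx : (F x).StrictlyInside (F w)) :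
    (F y).StrictlyInside (F w) := by
  induction q with
  | nil => exact hx
  | @cons x m y hxm q ih =>
    have hm : m ∉ closedNbhd G w := hq m (by simp)
    have hd : (F m).frame ∩ (F w).frame = ∅ := hF.frame_inter_eq_empty
      (fun h => hm (Or.inl h)) fun h => hm (Or.inr h.symm)
    exact ih (fun z hz => hq z (by simp [hz])) (hx.of_crosses (hF.crosses_or_crosses hxm) hd)

lemma exists_strictlyInside (hF : IsFrameRepresentation G F) (hG : G.CliqueFree 3) {C : Set V}
    (hfin : C.Finite) (hne : C.Nonempty)
    (hC : ∀ t ∈ C, ∃ r ∈ C, ∃ s ∈ C, r ≠ s ∧ G.Adj t r ∧ G.Adj t s) :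
    ∃ z ∈ C, ∃ w ∈ C, z ∉ closedNbhd G w ∧ (F z).StrictlyInside (F w) := by
  obtain ⟨t, ht, hmax⟩ := C.exists_max_image (fun v => (F v).x1) hfin hne
  obtain ⟨r, hr, s, hs, hrs, htr, hts⟩ := hC t ht
  -- `F t` has the rightmost left side, so every neighbour crosses it from the left
  have hcross : ∀ v ∈ C, G.Adj t v → (F v).Crosses (F t) := fun v hv htv =>
    (hF.crosses_or_crosses htv).resolve_left fun h => (hmax v hv).not_gt h.1
  have hrs' : ¬ G.Adj r s := by
    classical
    exact fun h => hG {t, r, s} (SimpleGraph.is3Clique_triple_iff.mpr ⟨htr, hts, h⟩)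
  rcases Box.strictlyInside_or_strictlyInside (hF.frame_inter_eq_empty hrs hrs')
      ⟨_, (hcross r hr htr).mem_region, (hcross s hs hts).mem_region⟩ with h | h
  · exact ⟨r, hr, s, hs, by rintro (h | h) <;> [exact hrs h; exact hrs' h.symm], h⟩
  · exact ⟨s, hs, r, hr, by rintro (h | h) <;> [exact hrs h.symm; exact hrs' h], h⟩

end IsFrameRepresentation

namespace SimpleGraph.Walk

variable {V : Type*} {G : SimpleGraph V} {u v x y : V} {i j n : ℕ}

lemma IsPath.add_one_eq_or_of_mk_mem_edges {p : G.Walk u v} (hp : p.IsPath) (hi : i ≤ p.length)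
    (hj : j ≤ p.length) (hx : p.getVert i = x) (hy : p.getVert j = y) (h : s(x, y) ∈ p.edges) :
    i + 1 = j ∨ j + 1 = i := by
  obtain ⟨m, hm, hmxy⟩ := p.mk_mem_edges_iff_exists.mp h
  have inj := hp.getVert_injOn
  rcases Sym2.eq_iff.mp hmxy with ⟨h₁, h₂⟩ | ⟨h₁, h₂⟩
  · have := inj (show m ≤ p.length by omega) hi (h₁.trans hx.symm)
    have := inj (show m + 1 ≤ p.length by omega) hj (h₂.trans hy.symm)
    omega
  · have := inj (show m ≤ p.length by omega) hj (h₁.trans hy.symm)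
    have := inj (show m + 1 ≤ p.length by omega) hi (h₂.trans hx.symm)
    omega

lemma avoids_take_or_avoids_drop (p : G.Walk u v) {X : Set V} (hn : p.getVert n ∉ X)
    (hX : ∀ i j, i < n → n < j → j ≤ p.length → p.getVert i ∈ X → p.getVert j ∉ X) :
    (∀ y ∈ (p.take n).support, y ∉ X) ∨ ∀ y ∈ (p.drop n).support, y ∉ X := by
  by_contra! h
  obtain ⟨⟨_, h₁, hX₁⟩, ⟨_, h₂, hX₂⟩⟩ := h
  obtain ⟨i, rfl, -⟩ := mem_support_iff_exists_getVert.mp h₁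
  obtain ⟨j, rfl, hj⟩ := mem_support_iff_exists_getVert.mp h₂
  rw [take_getVert] at hX₁
  rw [drop_getVert] at hX₂
  rw [drop_length] at hj
  rcases Nat.lt_or_ge i n with hi | hi
  · rw [min_eq_right hi.le] at hX₁
    rcases Nat.eq_zero_or_pos j with rfl | hj₀
    · exact hn hX₂
    · exact hX i (n + j) hi (by omega) (by omega) hX₁ hX₂
  · exact hn (min_eq_left hi ▸ hX₁)

end SimpleGraph.Walk

namespace MultiSubdivision

open SimpleGraph

variable {V W : Type} {G : Multigraph V} {H : SimpleGraph W} {k : ℕ}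
  (S : MultiSubdivision G H k) {a b c d u v : V} {t w x y z : W}

lemma eq_or_eq_of_f_mem_support {i : Fin (G.m u v)} (h : S.f a ∈ (S.path u v i).support) :
    a = u ∨ a = v := by
  by_contra! hne
  exact S.interior_avoid u v i a
    ⟨h, fun he => hne.1 (S.f.injective he), fun he => hne.2 (S.f.injective he)⟩

lemma eq_zero_or_eq_length_of_getVert_eq_f {i : Fin (G.m u v)} {n : ℕ}
    (hn : n ≤ (S.path u v i).length) (h : (S.path u v i).getVert n = S.f a) :
    n = 0 ∨ n = (S.path u v i).length := by
  rcases S.eq_or_eq_of_f_mem_support (h ▸ (S.path u v i).getVert_mem_support n) with rfl | rfl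
  · exact Or.inl (((S.isPath _ _ i).getVert_eq_start_iff hn).mp h)
  · exact Or.inr (((S.isPath _ _ i).getVert_eq_end_iff hn).mp h)

lemma eq_or_eq_of_mem_support_of_mem_support {u' v' : V} {i : Fin (G.m u v)}
    {i' : Fin (G.m u' v')} (hx : x ∉ Set.range S.f) (h : x ∈ (S.path u v i).support)
    (h' : x ∈ (S.path u' v' i').support) :
    (u = u' ∧ v = v' ∧ (i : ℕ) = i') ∨ (u = v' ∧ v = u' ∧ (i : ℕ) = i') :=
  S.interior_disjoint u v i u' v' i'
    ⟨x, ⟨h, fun he => hx ⟨u, he.symm⟩, fun he => hx ⟨v, he.symm⟩⟩,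
      ⟨h', fun he => hx ⟨u', he.symm⟩, fun he => hx ⟨v', he.symm⟩⟩⟩

lemma mk_mem_edges_of_adj {i : Fin (G.m u v)} (hx : x ∉ Set.range S.f)
    (h : x ∈ (S.path u v i).support) (hxy : H.Adj x y) : s(x, y) ∈ (S.path u v i).edges := by
  obtain ⟨u', v', i', he⟩ := S.edge_cover s(x, y) hxy
  rcases S.eq_or_eq_of_mem_support_of_mem_support hx h
      ((S.path u' v' i').fst_mem_support_of_mem_edges he) with ⟨rfl, rfl, hi⟩ | ⟨rfl, rfl, hi⟩
  · rwa [Fin.ext hi]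
  · rwa [show i' = Fin.cast (G.symm u v) i from Fin.ext hi.symm, S.path_symm,
      Walk.edges_reverse, List.mem_reverse] at he

lemma not_adj_f (hk : 1 ≤ k) (a b : V) : ¬ H.Adj (S.f a) (S.f b) := by
  intro h
  obtain ⟨u, v, i, he⟩ := S.edge_cover s(S.f a, S.f b) h
  obtain ⟨m, hm, hme⟩ := (S.path u v i).mk_mem_edges_iff_exists.mp he
  have hlen := S.length_le u v i
  rcases Sym2.eq_iff.mp hme with ⟨h₁, h₂⟩ | ⟨h₁, h₂⟩ <;>
  · have := S.eq_zero_or_eq_length_of_getVert_eq_f (by omega) h₁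
    have := S.eq_zero_or_eq_length_of_getVert_eq_f (by omega) h₂
    omega

lemma notMem_range_of_adj (hk : 1 ≤ k) (hxy : H.Adj x y) (hx : x ∈ Set.range S.f) :
    y ∉ Set.range S.f := by
  rintro ⟨b, rfl⟩
  obtain ⟨a, rfl⟩ := hx
  exact S.not_adj_f hk a b hxy

lemma mk_mem_edges_of_adj_of_mem_support (hk : 1 ≤ k) {i : Fin (G.m u v)}
    (hx : x ∈ (S.path u v i).support) (hy : y ∈ (S.path u v i).support) (hxy : H.Adj x y) :
    s(x, y) ∈ (S.path u v i).edges := by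
  by_cases hxf : x ∈ Set.range S.f
  · rw [Sym2.eq_swap]
    exact S.mk_mem_edges_of_adj (S.notMem_range_of_adj hk hxy hxf) hy hxy.symm
  · exact S.mk_mem_edges_of_adj hxf hx hxy

lemma cliqueFree_three (S : MultiSubdivision G H k) (hk : 1 ≤ k) : H.CliqueFree 3 := by
  classical
  intro T hT
  obtain ⟨x, y, z, hxy, hxz, hyz, -⟩ := SimpleGraph.is3Clique_iff.mp hT
  obtain ⟨u, v, i, he⟩ := S.edge_cover s(x, y) hxy
  have hx := (S.path u v i).fst_mem_support_of_mem_edges he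
  have hy := (S.path u v i).snd_mem_support_of_mem_edges he
  have hz : z ∈ (S.path u v i).support := by
    by_cases hxf : x ∈ Set.range S.f
    · exact (S.path u v i).snd_mem_support_of_mem_edges
        (S.mk_mem_edges_of_adj (S.notMem_range_of_adj hk hxy hxf) hy hyz)
    · exact (S.path u v i).snd_mem_support_of_mem_edges (S.mk_mem_edges_of_adj hxf hx hxz)
  obtain ⟨l, hl, hl'⟩ := Walk.mem_support_iff_exists_getVert.mp hx
  obtain ⟨m, hm, hm'⟩ := Walk.mem_support_iff_exists_getVert.mp hy
  obtain ⟨n, hn, hn'⟩ := Walk.mem_support_iff_exists_getVert.mp hz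
  have hp := S.isPath u v i
  have := hp.add_one_eq_or_of_mk_mem_edges hl' hm' hl hm
    (S.mk_mem_edges_of_adj_of_mem_support hk hx hy hxy)
  have := hp.add_one_eq_or_of_mk_mem_edges hl' hn' hl hn
    (S.mk_mem_edges_of_adj_of_mem_support hk hx hz hxz)
  have := hp.add_one_eq_or_of_mk_mem_edges hm' hn' hm hn
    (S.mk_mem_edges_of_adj_of_mem_support hk hy hz hyz)
  omega

lemma eq_of_adj_f_of_adj_f (hk : 2 ≤ k) (ha : H.Adj w (S.f a)) (hb : H.Adj w (S.f b)) :
    a = b := by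
  have hw : w ∉ Set.range S.f := fun hw => S.notMem_range_of_adj (by omega) ha hw ⟨a, rfl⟩
  obtain ⟨u, v, i, he⟩ := S.edge_cover s(w, S.f a) ha
  have hwP := (S.path u v i).fst_mem_support_of_mem_edges he
  have he' := S.mk_mem_edges_of_adj hw hwP hb
  obtain ⟨m, hm, hm'⟩ := Walk.mem_support_iff_exists_getVert.mp hwP
  obtain ⟨n, hn, hn'⟩ := Walk.mem_support_iff_exists_getVert.mp
    ((S.path u v i).snd_mem_support_of_mem_edges he)
  obtain ⟨l, hl, hl'⟩ := Walk.mem_support_iff_exists_getVert.mp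
    ((S.path u v i).snd_mem_support_of_mem_edges he')
  have hp := S.isPath u v i
  have := hp.add_one_eq_or_of_mk_mem_edges hm' hn' hm hn he
  have := hp.add_one_eq_or_of_mk_mem_edges hm' hl' hm hl he'
  have := S.eq_zero_or_eq_length_of_getVert_eq_f hn' hn
  have := S.eq_zero_or_eq_length_of_getVert_eq_f hl' hl
  have := S.length_le u v i
  by_contra hab
  have : n ≠ l := by rintro rfl; exact hab (S.f.injective (hn.symm.trans hl))
  omega

def pathSet (a b : V) : Set W :=
  {x | ∃ i, x ∈ (S.path a b i).support}

lemma pathSet_comm : S.pathSet a b = S.pathSet b a := by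
  have key : ∀ a b, S.pathSet a b ⊆ S.pathSet b a := by
    rintro a b x ⟨i, hx⟩
    exact ⟨Fin.cast (G.symm a b) i, by simpa [S.path_symm] using hx⟩
  exact (key a b).antisymm (key b a)

lemma eq_f_or_eq_f_of_mem_pathSet {i : Fin (G.m c d)} (hx : x ∈ S.pathSet a b)
    (hx' : x ∈ (S.path c d i).support) (hcd : s(c, d) ≠ s(a, b)) : x = S.f c ∨ x = S.f d := by
  obtain ⟨j, hj⟩ := hx
  by_cases hxf : x ∈ Set.range S.f
  · obtain ⟨e, rfl⟩ := hxf
    rcases S.eq_or_eq_of_f_mem_support hx' with rfl | rfl <;> simp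
  · rcases S.eq_or_eq_of_mem_support_of_mem_support hxf hj hx' with
      ⟨rfl, rfl, -⟩ | ⟨rfl, rfl, -⟩
    · exact absurd rfl hcd
    · exact absurd Sym2.eq_swap hcd

lemma f_notMem_closedNbhd (hk : 1 ≤ k) (hw : w ∈ S.pathSet a b) (hca : c ≠ a) (hcb : c ≠ b) :
    S.f c ∉ closedNbhd H w := by
  obtain ⟨j, hj⟩ := hw
  have hc : S.f c ∉ (S.path a b j).support := fun h =>
    (S.eq_or_eq_of_f_mem_support h).elim hca hcb
  rintro (rfl | h)
  · exact hc hj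
  · exact hc ((S.path a b j).snd_mem_support_of_mem_edges
      (S.mk_mem_edges_of_adj (fun hw => S.notMem_range_of_adj hk h hw ⟨c, rfl⟩) hj h))

lemma notMem_closedNbhd_of_mem_support (hk : 1 ≤ k) (hw : w ∈ S.pathSet a b)
    {i : Fin (G.m c d)} (hcd : s(c, d) ≠ s(a, b)) (hc : S.f c ∉ closedNbhd H w)
    (hd : S.f d ∉ closedNbhd H w) (hy : y ∈ (S.path c d i).support) :
    y ∉ closedNbhd H w := by
  intro hyw
  obtain ⟨x, hxw, hxab, hxcd⟩ :
      ∃ x ∈ closedNbhd H w, x ∈ S.pathSet a b ∧ x ∈ (S.path c d i).support := by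
    rcases hyw with rfl | hwy
    · exact ⟨y, Or.inl rfl, hw, hy⟩
    by_cases hwf : w ∈ Set.range S.f
    · exact ⟨w, Or.inl rfl, hw, (S.path c d i).snd_mem_support_of_mem_edges
        (S.mk_mem_edges_of_adj (S.notMem_range_of_adj hk hwy hwf) hy hwy.symm)⟩
    · obtain ⟨j, hj⟩ := hw
      exact ⟨y, Or.inr hwy, ⟨j, (S.path a b j).snd_mem_support_of_mem_edges
        (S.mk_mem_edges_of_adj hwf hj hwy)⟩, hy⟩
  rcases S.eq_f_or_eq_f_of_mem_pathSet hxab hxcd hcd with rfl | rfl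
  · exact hc hxw
  · exact hd hxw

lemma exists_two_neighbors_f (hk : 1 ≤ k) (hab : 2 ≤ G.m a b) :
    ∃ r ∈ S.pathSet a b, ∃ s ∈ S.pathSet a b, r ≠ s ∧ H.Adj (S.f a) r ∧ H.Adj (S.f a) s := by
  have hnil : ∀ i, ¬ (S.path a b i).Nil := fun i h => by
    have := Walk.length_eq_zero_iff.mpr h
    have := S.length_le a b i
    omega
  let i₀ : Fin (G.m a b) := ⟨0, by omega⟩
  let i₁ : Fin (G.m a b) := ⟨1, by omega⟩
  refine ⟨_, ⟨i₀, Walk.getVert_mem_support _ 1⟩, _, ⟨i₁, Walk.getVert_mem_support _ 1⟩,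
    fun h => ?_, Walk.adj_snd (hnil _), Walk.adj_snd (hnil _)⟩
  have hf : (S.path a b i₀).getVert 1 ∉ Set.range S.f := by
    rintro ⟨e, he⟩
    have := S.length_le a b i₀
    have := S.eq_zero_or_eq_length_of_getVert_eq_f (by omega) he.symm
    omega
  have h₁ : (S.path a b i₀).getVert 1 ∈ (S.path a b i₁).support := by
    rw [h]
    exact Walk.getVert_mem_support _ 1
  rcases S.eq_or_eq_of_mem_support_of_mem_support hf (Walk.getVert_mem_support _ 1) h₁ with
    ⟨-, -, h01⟩ | ⟨rfl, -, -⟩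
  · simp [i₀, i₁] at h01
  · simp [G.loopless] at hab

lemma exists_two_neighbors_of_mem_pathSet (hk : 1 ≤ k) (hab : 2 ≤ G.m a b) (ht : t ∈ S.pathSet a b) :
    ∃ r ∈ S.pathSet a b, ∃ s ∈ S.pathSet a b, r ≠ s ∧ H.Adj t r ∧ H.Adj t s := by
  obtain ⟨j, hj⟩ := ht
  obtain ⟨n, rfl, hn⟩ := Walk.mem_support_iff_exists_getVert.mp hj
  rcases Nat.eq_zero_or_pos n with rfl | h₀
  · simpa using S.exists_two_neighbors_f hk hab
  rcases hn.eq_or_lt with rfl | h₁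
  · rw [Walk.getVert_length, S.pathSet_comm]
    exact S.exists_two_neighbors_f hk (G.symm a b ▸ hab)
  refine ⟨_, ⟨j, Walk.getVert_mem_support _ (n - 1)⟩, _, ⟨j, Walk.getVert_mem_support _ (n + 1)⟩,
    fun h => ?_, ?_, (S.path a b j).adj_getVert_succ h₁⟩
  · have := (S.isPath a b j).getVert_injOn (show n - 1 ≤ _ by omega) (show n + 1 ≤ _ by omega) h
    omega
  · have := (S.path a b j).adj_getVert_succ (i := n - 1) (by omega)
    rw [Nat.sub_add_cancel h₀] at this
    exact this.symm

lemma exists_walk_notMem_closedNbhd (hk : 2 ≤ k) {j : Fin (G.m a b)}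
    (hz : z ∈ (S.path a b j).support) (hzw : z ∉ closedNbhd H w) :
    (∃ q : H.Walk z (S.f a), ∀ y ∈ q.support, y ∉ closedNbhd H w) ∨
      ∃ q : H.Walk z (S.f b), ∀ y ∈ q.support, y ∉ closedNbhd H w := by
  set P := S.path a b j
  have hP : P.IsPath := S.isPath a b j
  obtain ⟨n, rfl, hn⟩ := Walk.mem_support_iff_exists_getVert.mp hz
  -- `N[w]` meets `P` on one side of `z` only
  have hX : ∀ i l, i < n → n < l → l ≤ P.length →
      P.getVert i ∈ closedNbhd H w → P.getVert l ∉ closedNbhd H w := by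
    intro i l hi hl hlen hiw hlw
    by_cases hwP : w ∈ P.support
    · obtain ⟨m, rfl, hm⟩ := Walk.mem_support_iff_exists_getVert.mp hwP
      have near : ∀ i ≤ P.length, P.getVert i ∈ closedNbhd H (P.getVert m) →
          i ≤ m + 1 ∧ m ≤ i + 1 := by
        rintro i hi (h | h)
        · have := hP.getVert_injOn hi hm h
          omega
        · have := hP.add_one_eq_or_of_mk_mem_edges hm hi rfl rfl
            (S.mk_mem_edges_of_adj_of_mem_support (by omega) hwP (P.getVert_mem_support i) h)
          omega
      have := near i (by omega) hiw
      have := near l hlen hlw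
      obtain rfl : n = m := by omega
      exact hzw (Or.inl rfl)
    -- off `P`, `w` is adjacent only to ends of `P`, and to at most one of them
    · have hbranch : ∀ i, P.getVert i ∈ closedNbhd H w →
          ∃ e, P.getVert i = S.f e ∧ H.Adj w (S.f e) := by
        rintro i (h | h)
        · exact absurd (h ▸ P.getVert_mem_support i) hwP
        · by_contra! hf
          exact hwP (P.snd_mem_support_of_mem_edges (S.mk_mem_edges_of_adj
            (by rintro ⟨e, he⟩; exact hf e he.symm (he ▸ h)) (P.getVert_mem_support i) h.symm))
      obtain ⟨e, he, hwe⟩ := hbranch i hiw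
      obtain ⟨e', he', hwe'⟩ := hbranch l hlw
      obtain rfl := S.eq_of_adj_f_of_adj_f hk hwe hwe'
      have := hP.getVert_injOn (show i ≤ _ by omega) hlen (he.trans he'.symm)
      omega
  rcases P.avoids_take_or_avoids_drop hzw hX with h | h
  · exact Or.inl ⟨(P.take n).reverse, by simpa using h⟩
  · exact Or.inr ⟨P.drop n, h⟩

variable {F : W → Box}

lemma strictlyInside_f_of_walk (hF : IsFrameRepresentation H F) (hk : 1 ≤ k)
    (hw : w ∈ S.pathSet a b) {x y : V} (r : G.support.Walk x y) (hb : b ∉ r.support)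
    (hr : ∀ c ∈ r.support, S.f c ∉ closedNbhd H w) (hx : (F (S.f x)).StrictlyInside (F w)) :
    (F (S.f y)).StrictlyInside (F w) := by
  induction r with
  | nil => exact hx
  | @cons x m y hxm r ih =>
    simp only [Walk.support_cons, List.mem_cons, not_or, forall_eq_or_imp] at hb hr
    have hxm' : s(x, m) ≠ s(a, b) := by
      rintro h
      rcases Sym2.eq_iff.mp h with ⟨-, rfl⟩ | ⟨rfl, -⟩
      · exact hb.2 r.start_mem_support
      · exact hb.1 rfl
    refine ih hb.2 hr.2 (hF.strictlyInside_of_walk (S.path x m ⟨0, hxm⟩) (fun z hz => ?_) hx)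
    exact S.notMem_closedNbhd_of_mem_support hk hw hxm' hr.1 (hr.2 m r.start_mem_support) hz

lemma strictlyInside_f_of_walk_of_notMem (hF : IsFrameRepresentation H F) (hk : 1 ≤ k)
    (hw : w ∈ S.pathSet a b) (r : G.support.Walk a c) (hb : b ∉ r.support)
    (ha : S.f a ∉ closedNbhd H w) (hx : (F (S.f a)).StrictlyInside (F w)) :
    (F (S.f c)).StrictlyInside (F w) := by
  refine S.strictlyInside_f_of_walk hF hk hw r hb (fun e he => ?_) hx
  obtain rfl | hea := eq_or_ne e a
  · exact ha
  · exact S.f_notMem_closedNbhd hk hw hea fun h => hb (h ▸ he)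

lemma strictlyInside_of_mem_pathSet (hF : IsFrameRepresentation H F) (hk : 1 ≤ k)
    (hw : w ∈ S.pathSet a b) (hca : c ≠ a) (hcb : c ≠ b) (hda : d ≠ a) (hdb : d ≠ b)
    (hc : (F (S.f c)).StrictlyInside (F w)) (hx : x ∈ S.pathSet c d) :
    (F x).StrictlyInside (F w) := by
  classical
  obtain ⟨j, hj⟩ := hx
  have hcd : s(c, d) ≠ s(a, b) := by
    rintro h
    rcases Sym2.eq_iff.mp h with ⟨rfl, -⟩ | ⟨rfl, -⟩
    · exact hca rfl
    · exact hcb rfl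
  refine hF.strictlyInside_of_walk ((S.path c d j).takeUntil x hj) (fun y hy => ?_) hc
  exact S.notMem_closedNbhd_of_mem_support hk hw hcd (S.f_notMem_closedNbhd hk hw hca hcb)
    (S.f_notMem_closedNbhd hk hw hda hdb) ((S.path c d j).support_takeUntil_subset_support hj hy)

lemma exists_forall_strictlyInside [Finite W] (hF : IsFrameRepresentation H F) (hk : 2 ≤ k)
    (hab : 2 ≤ G.m a b) (hca : c ≠ a) (hcb : c ≠ b) (hda : d ≠ a) (hdb : d ≠ b)
    (wac : ∃ r : G.support.Walk a c, b ∉ r.support)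
    (wbc : ∃ r : G.support.Walk b c, a ∉ r.support) :
    ∃ w ∈ S.pathSet a b, ∀ x ∈ S.pathSet c d, (F x).StrictlyInside (F w) := by
  obtain ⟨z, ⟨j, hz⟩, w, hw, hzw, hzw'⟩ := hF.exists_strictlyInside (C := S.pathSet a b)
    (S.cliqueFree_three (by omega)) (Set.toFinite _)
    ⟨S.f a, ⟨⟨0, by omega⟩, Walk.start_mem_support _⟩⟩
    fun t ht => S.exists_two_neighbors_of_mem_pathSet (by omega) hab ht
  refine ⟨w, hw, fun x hx => S.strictlyInside_of_mem_pathSet hF (by omega) hw hca hcb hda hdb ?_ hx⟩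
  rcases S.exists_walk_notMem_closedNbhd hk hz hzw with ⟨q, hq⟩ | ⟨q, hq⟩
  · obtain ⟨r, hr⟩ := wac
    exact S.strictlyInside_f_of_walk_of_notMem hF (by omega) hw r hr (hq _ q.end_mem_support)
      (hF.strictlyInside_of_walk q hq hzw')
  · obtain ⟨r, hr⟩ := wbc
    rw [S.pathSet_comm] at hw
    exact S.strictlyInside_f_of_walk_of_notMem hF (by omega) hw r hr (hq _ q.end_mem_support)
      (hF.strictlyInside_of_walk q hq hzw')

theorem not_isFrameRepresentation [Finite W] (S : MultiSubdivision G H k) (hk : 2 ≤ k)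
    (hab : 2 ≤ G.m a b) (hcd : 2 ≤ G.m c d) (hca : c ≠ a) (hcb : c ≠ b) (hda : d ≠ a)
    (hdb : d ≠ b) (wac : ∃ r : G.support.Walk a c, b ∉ r.support)
    (wbc : ∃ r : G.support.Walk b c, a ∉ r.support)
    (wca : ∃ r : G.support.Walk c a, d ∉ r.support)
    (wda : ∃ r : G.support.Walk d a, c ∉ r.support) (F : W → Box) :
    ¬ IsFrameRepresentation H F := by
  intro hF
  obtain ⟨w, hw, hcdw⟩ := S.exists_forall_strictlyInside hF hk hab hca hcb hda hdb wac wbc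
  obtain ⟨w', hw', habw'⟩ := S.exists_forall_strictlyInside hF hk hcd hca.symm hda.symm
    hcb.symm hdb.symm wca wda
  exact (hcdw w' hw').asymm (habw' w hw)

end MultiSubdivision

/-- No `≥2`-subdivision of `Ĥ₁` and no `≥2`-subdivision of `Ĥ₂`
is a restricted frame graph. -/
theorem no_ge_two_subdivision_H1hat_H2hat
    {W : Type} [Fintype W] (H : SimpleGraph W)
    (hsub : IsSubdivisionGE H1hat 2 H ∨ IsSubdivisionGE H2hat 2 H) :
    ¬ IsRestrictedFrameGraph H := by
  rintro ⟨F, hF⟩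
  rcases hsub with ⟨⟨S⟩⟩ | ⟨⟨S⟩⟩
  · refine S.not_isFrameRepresentation (a := 0) (b := 1) (c := 4) (d := 5) le_rfl
      (by decide) (by decide) (by decide) (by decide) (by decide) (by decide) ?_ ?_ ?_ ?_ F hF
    · exact ⟨.cons (by decide : 0 < H1hat.m 0 2) (.cons (by decide : 0 < H1hat.m 2 3)
        (.cons (by decide : 0 < H1hat.m 3 4) .nil)), by decide⟩
    · exact ⟨.cons (by decide : 0 < H1hat.m 1 2) (.cons (by decide : 0 < H1hat.m 2 3)
        (.cons (by decide : 0 < H1hat.m 3 4) .nil)), by decide⟩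
    · exact ⟨.cons (by decide : 0 < H1hat.m 4 3) (.cons (by decide : 0 < H1hat.m 3 2)
        (.cons (by decide : 0 < H1hat.m 2 0) .nil)), by decide⟩
    · exact ⟨.cons (by decide : 0 < H1hat.m 5 3) (.cons (by decide : 0 < H1hat.m 3 2)
        (.cons (by decide : 0 < H1hat.m 2 0) .nil)), by decide⟩
  · refine S.not_isFrameRepresentation (a := 0) (b := 1) (c := 3) (d := 4) le_rfl
      (by decide) (by decide) (by decide) (by decide) (by decide) (by decide) ?_ ?_ ?_ ?_ F hF
    · exact ⟨.cons (by decide : 0 < H2hat.m 0 2) (.cons (by decide : 0 < H2hat.m 2 3) .nil),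
        by decide⟩
    · exact ⟨.cons (by decide : 0 < H2hat.m 1 2) (.cons (by decide : 0 < H2hat.m 2 3) .nil),
        by decide⟩
    · exact ⟨.cons (by decide : 0 < H2hat.m 3 2) (.cons (by decide : 0 < H2hat.m 2 0) .nil),
        by decide⟩
    · exact ⟨.cons (by decide : 0 < H2hat.m 4 2) (.cons (by decide : 0 < H2hat.m 2 0) .nil),
        by decide⟩
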